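/- arXiv:2401.13725 — 3 statements merged into one kernel-verified Lean document; each statement's English description precedes it below -/
import Mathlib

section
/- First derivative Van der Corput lemma: let f be a real differentiable function and g a continuous function on [a,b]. If f'(x)/g(x) is monotone on [a,b] and |f'(x)/g(x)| ≥ Y > 0 for all x in [a,b], then |∫_a^b g(x) e^{i f(x)} dx| ≤ C/Y for an absolute constant C independent of f and g. -/
open Complex Set MeasureTheory Function

noncomputable section

lemma norm_expI (t : ℝ) : ‖Complex.exp (I * t)‖ = 1 := by
  rw [Complex.norm_exp]
  simp [Complex.mul_re]

lemma key_mono (a b : ℝ) (hab : a ≤ b) (f f' Φ : ℝ → ℝ) (B : ℝ)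
    (hf : ∀ x ∈ Icc a b, HasDerivAt f (f' x) x)
    (hΦ : Monotone Φ) (hΦB : ∀ x, |Φ x| ≤ B)
    (hf'int : IntervalIntegrable f' volume a b) :
    ‖∫ x in Ioc a b, ((Φ x * f' x : ℝ) : ℂ) * Complex.exp (I * f x)‖ ≤ 6 * B := by
  have hB : 0 ≤ B := le_trans (abs_nonneg _) (hΦB 0)
  set h : ℝ → ℂ := fun x => Complex.exp (I * f x) with hh
  set F : ℝ → ℂ := fun x => (f' x : ℂ) * (I * Complex.exp (I * f x)) with hFdef
  have hfc : ContinuousOn f (Icc a b) := fun x hx =>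
    (hf x hx).continuousAt.continuousWithinAt
  have hd : ∀ x ∈ Icc a b, HasDerivAt h (F x) x := by
    intro x hx
    have := (((hf x hx).ofReal_comp).const_mul I).cexp
    convert this using 1
    simp only [hFdef, hh]
    ring
  have hFint : IntervalIntegrable F volume a b := by
    have h1 : IntervalIntegrable (fun x => (f' x : ℂ)) volume a b :=
      ⟨hf'int.1.ofReal, hf'int.2.ofReal⟩
    apply h1.mul_continuousOn
    rw [uIcc_of_le hab]
    exact continuousOn_const.mul
      (Complex.continuous_exp.comp_continuousOn
        (continuousOn_const.mul (Complex.continuous_ofReal.comp_continuousOn hfc)))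
  have hftc : ∀ t ∈ Icc a b, ∫ x in t..b, F x = h b - h t := by
    intro t ht
    apply intervalIntegral.integral_eq_sub_of_hasDerivAt
    · intro x hx
      rw [uIcc_of_le ht.2] at hx
      exact hd x ⟨le_trans ht.1 hx.1, hx.2⟩
    · refine hFint.mono_set ?_
      rw [uIcc_of_le ht.2, uIcc_of_le hab]
      exact Icc_subset_Icc ht.1 le_rfl
  have hnorm : ∀ t : ℝ, ‖h t‖ = 1 := fun t => norm_expI (f t)
  have hsub2 : ∀ s t : ℝ, ‖h s - h t‖ ≤ 2 := by
    intro s t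
    calc ‖h s - h t‖ ≤ ‖h s‖ + ‖h t‖ := norm_sub_le _ _
    _ = 2 := by rw [hnorm, hnorm]; norm_num
  set S := hΦ.stieltjesFunction with hSdef
  have hSx : ∀ x, S x = rightLim Φ x := fun x => rfl
  have hSB : ∀ x, |S x| ≤ B := by
    intro x
    rw [abs_le]
    constructor
    · exact le_trans (abs_le.1 (hΦB x)).1 (by rw [hSx]; exact hΦ.le_rightLim le_rfl)
    · exact le_trans (by rw [hSx]; exact hΦ.rightLim_le (lt_add_one x)) (abs_le.1 (hΦB (x+1))).2
  have haeSΦ : ∀ᵐ x ∂(volume : Measure ℝ), Φ x = S x := by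
    have hcont : ∀ᵐ x ∂(volume : Measure ℝ), ContinuousAt Φ x := by
      rw [ae_iff]
      exact hΦ.countable_not_continuousAt.measure_zero _
    filter_upwards [hcont] with x hx
    rw [hSx]
    exact (rightLim_eq_of_tendsto
      (hx.tendsto.mono_left nhdsWithin_le_nhds)).symm
  set μ := S.measure with hμdef
  set ν := μ.restrict (Ioc a b) with hνdef
  haveI hνfin : IsFiniteMeasure ν := by
    constructor
    rw [hνdef, Measure.restrict_apply_univ, S.measure_Ioc]
    exact ENNReal.ofReal_lt_top
  set P := (volume : Measure ℝ).restrict (Ioc a b) with hPdef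
  have hμab : (μ (Ioc a b)).toReal = S b - S a := by
    rw [hμdef, S.measure_Ioc, ENNReal.toReal_ofReal (sub_nonneg.2 (S.mono hab))]
  have hSab : S b - S a ≤ 2 * B := by
    have h1 := abs_le.1 (hSB a); have h2 := abs_le.1 (hSB b); linarith
  -- reduce to bounding ∫ Φ • F
  have hkey : ∀ x : ℝ, ((Φ x * f' x : ℝ) : ℂ) * Complex.exp (I * f x)
      = (-I) * ((Φ x : ℂ) * F x) := by
    intro x
    simp only [hFdef]
    push_cast
    ring_nf
    rw [Complex.I_sq]
    ring
  simp_rw [hkey, integral_const_mul, norm_mul, norm_neg, Complex.norm_I, one_mul]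
  -- replace Φ by S
  have hFI : IntegrableOn F (Ioc a b) volume :=
    (intervalIntegrable_iff_integrableOn_Ioc_of_le hab).1 hFint
  have step1 : ∫ x in Ioc a b, (Φ x : ℂ) * F x = ∫ x in Ioc a b, (S x : ℂ) * F x := by
    apply integral_congr_ae
    apply ae_restrict_of_ae
    filter_upwards [haeSΦ] with x hx
    rw [hx]
  rw [step1]
  -- split S x = S a + e x
  set e : ℝ → ℝ := fun x => (μ (Ioc a x)).toReal with hedef
  have hμ_ne_top : ∀ x, μ (Ioc a x) ≠ ⊤ := by
    intro x; rw [hμdef, S.measure_Ioc]; exact ENNReal.ofReal_ne_top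
  have he_mono : Monotone e := by
    intro x y hxy
    exact (ENNReal.toReal_le_toReal (hμ_ne_top x) (hμ_ne_top y)).2
      (measure_mono (Ioc_subset_Ioc_right hxy))
  have he_eq : ∀ x, a ≤ x → e x = S x - S a := by
    intro x hx
    rw [hedef]; simp only
    rw [hμdef, S.measure_Ioc, ENNReal.toReal_ofReal (sub_nonneg.2 (S.mono hx))]
  have he_bound : ∀ x, |e x| ≤ 2 * B := by
    intro x
    by_cases hx : a ≤ x
    · rw [he_eq x hx, abs_le]
      have h1 := abs_le.1 (hSB a); have h2 := abs_le.1 (hSB x); constructor <;> linarith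
    · rw [hedef]; simp only
      rw [Ioc_eq_empty (by intro hc; exact hx (le_of_lt hc)), measure_empty]
      simp [hB]
  have he_int : IntegrableOn (fun x => (e x : ℂ) * F x) (Ioc a b) volume := by
    apply hFI.bdd_mul (c := 2 * B)
    · exact ((Complex.measurable_ofReal.comp he_mono.measurable).aestronglyMeasurable)
    · exact Filter.Eventually.of_forall (fun x => by rw [Complex.norm_real]; exact he_bound x)
  have hconst_int : IntegrableOn (fun x => (S a : ℂ) * F x) (Ioc a b) volume :=
    hFI.const_mul _
  have step2 : ∫ x in Ioc a b, (S x : ℂ) * F x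
      = (∫ x in Ioc a b, (S a : ℂ) * F x) + ∫ x in Ioc a b, (e x : ℂ) * F x := by
    rw [← integral_add hconst_int he_int]
    apply setIntegral_congr_fun measurableSet_Ioc
    intro x hx
    simp only
    rw [he_eq x hx.1.le]
    push_cast
    ring
  rw [step2, integral_const_mul]
  -- the Fubini part
  set w : ℝ → ℝ → ℂ := fun x t => (Ioc a x).indicator (fun _ => F x) t with hwdef
  have hw_prod : Integrable (uncurry w) (P.prod ν) := by
    have hA : MeasurableSet {p : ℝ × ℝ | a < p.2 ∧ p.2 ≤ p.1} :=
      (measurableSet_lt measurable_const measurable_snd).inter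
        (measurableSet_le measurable_snd measurable_fst)
    have h1 : Integrable (fun p : ℝ × ℝ => F p.1) (P.prod ν) := by
      have := hFI.mul_prod (integrable_const (1 : ℂ) (μ := ν))
      simpa using this
    have heq : uncurry w = Set.indicator {p : ℝ × ℝ | a < p.2 ∧ p.2 ≤ p.1}
        (fun p => F p.1) := by
      ext ⟨x, t⟩
      by_cases hp : a < t ∧ t ≤ x <;>
        simp [hwdef, uncurry, Set.indicator_apply, Set.mem_Ioc, hp]
    rw [heq]
    exact h1.indicator hA
  have hTw : ∫ x in Ioc a b, (e x : ℂ) * F x = ∫ x, (∫ t, w x t ∂ν) ∂P := by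
    apply setIntegral_congr_fun measurableSet_Ioc
    intro x hx
    simp only [hwdef]
    rw [integral_indicator_const (F x) measurableSet_Ioc, hνdef,
      measureReal_restrict_apply measurableSet_Ioc,
      inter_eq_self_of_subset_left (Ioc_subset_Ioc_right hx.2), measureReal_def]
    rw [real_smul]
  have hswap : ∫ x, (∫ t, w x t ∂ν) ∂P = ∫ t, (∫ x, w x t ∂P) ∂ν :=
    integral_integral_swap hw_prod
  have hinner : ∀ t ∈ Ioc a b, (∫ x, w x t ∂P) = h b - h t := by
    intro t ht
    have hwt : ∀ x, w x t = (Ici t).indicator F x := by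
      intro x
      by_cases hx : t ≤ x <;>
        simp [hwdef, Set.indicator_apply, Set.mem_Ioc, Set.mem_Ici, hx, ht.1]
    simp_rw [hwt]
    rw [hPdef, integral_indicator measurableSet_Ici,
      Measure.restrict_restrict measurableSet_Ici]
    have hset : Ici t ∩ Ioc a b = Icc t b := by
      ext y
      simp only [mem_inter_iff, mem_Ici, mem_Ioc, mem_Icc]
      exact ⟨fun hy => ⟨hy.1, hy.2.2⟩, fun hy => ⟨hy.1, lt_of_lt_of_le ht.1 hy.1, hy.2⟩⟩
    rw [hset, integral_Icc_eq_integral_Ioc, ← intervalIntegral.integral_of_le ht.2]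
    exact hftc t ⟨ht.1.le, ht.2⟩
  have houter : ∫ t, (∫ x, w x t ∂P) ∂ν = ∫ t in Ioc a b, (h b - h t) ∂μ := by
    rw [hνdef]
    exact setIntegral_congr_fun measurableSet_Ioc (fun t ht => hinner t ht)
  have hT : ‖∫ x in Ioc a b, (e x : ℂ) * F x‖ ≤ 2 * (S b - S a) := by
    rw [hTw, hswap, houter]
    have hb2 : ‖∫ t in Ioc a b, (h b - h t) ∂μ‖ ≤ 2 * (ν univ).toReal := by
      apply norm_integral_le_of_norm_le_const
      exact Filter.Eventually.of_forall fun t => hsub2 _ _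
    calc ‖∫ t in Ioc a b, (h b - h t) ∂μ‖ ≤ 2 * (ν univ).toReal := hb2
      _ = 2 * (S b - S a) := by
          rw [hνdef, Measure.restrict_apply_univ, hμab]
  have hint_F : ∫ x in Ioc a b, F x = h b - h a := by
    rw [← intervalIntegral.integral_of_le hab]
    exact hftc a ⟨le_rfl, hab⟩
  refine le_trans (norm_add_le _ _) ?_
  have h1 : ‖(S a : ℂ) * ∫ x in Ioc a b, F x‖ ≤ B * 2 := by
    rw [norm_mul, Complex.norm_real, Real.norm_eq_abs, hint_F]
    exact mul_le_mul (hSB a) (hsub2 b a) (norm_nonneg _) hB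
  linarith [hT]

lemma keyB (a b : ℝ) (hab : a ≤ b) (f f' Φ g : ℝ → ℝ) (B : ℝ)
    (hf : ∀ x ∈ Icc a b, HasDerivAt f (f' x) x)
    (hΦ : Monotone Φ ∨ Antitone Φ) (hΦB : ∀ x, |Φ x| ≤ B)
    (hf'int : IntervalIntegrable f' volume a b)
    (hg : ∀ᵐ x ∂((volume : Measure ℝ).restrict (Ioc a b)), g x = Φ x * f' x) :
    ‖∫ x in a..b, (g x : ℂ) * Complex.exp (I * f x)‖ ≤ 6 * B := by
  rw [intervalIntegral.integral_of_le hab]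
  have hcongr : ∫ x in Ioc a b, (g x : ℂ) * Complex.exp (I * f x)
      = ∫ x in Ioc a b, ((Φ x * f' x : ℝ) : ℂ) * Complex.exp (I * f x) := by
    apply integral_congr_ae
    filter_upwards [hg] with x hx
    rw [hx]
  rw [hcongr]
  rcases hΦ with hm | hm
  · exact key_mono a b hab f f' Φ B hf hm hΦB hf'int
  · have hm' : Monotone (fun x => -Φ x) := fun x y hxy => neg_le_neg (hm hxy)
    have key2 := key_mono a b hab (fun x => -f x) (fun x => -f' x) (fun x => -Φ x) B
      (fun x hx => (hf x hx).neg) hm' (fun x => by rw [abs_neg]; exact hΦB x) hf'int.neg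
    have hconj : ∀ x : ℝ, (starRingEnd ℂ) (((Φ x * f' x : ℝ) : ℂ) * Complex.exp (I * f x))
        = ((-Φ x * -f' x : ℝ) : ℂ) * Complex.exp (I * ((-f x : ℝ) : ℂ)) := by
      intro x
      rw [map_mul, Complex.conj_ofReal, ← Complex.exp_conj, map_mul, Complex.conj_I, Complex.conj_ofReal]
      push_cast
      ring_nf
    calc ‖∫ x in Ioc a b, ((Φ x * f' x : ℝ) : ℂ) * Complex.exp (I * f x)‖
        = ‖(starRingEnd ℂ) (∫ x in Ioc a b, ((Φ x * f' x : ℝ) : ℂ)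
            * Complex.exp (I * f x))‖ := (RCLike.norm_conj _).symm
      _ = ‖∫ x in Ioc a b, ((-Φ x * -f' x : ℝ) : ℂ)
            * Complex.exp (I * ((-f x : ℝ) : ℂ))‖ := by
          rw [← integral_conj]
          congr 1
          exact integral_congr_ae (Filter.Eventually.of_forall fun x => hconj x)
      _ ≤ 6 * B := key2

lemma mainMono (a b : ℝ) (f f' g : ℝ → ℝ) (Y : ℝ) (hab : a ≤ b)
    (hf : ∀ x ∈ Icc a b, HasDerivAt f (f' x) x)
    (hg : ContinuousOn g (Icc a b))
    (hm : MonotoneOn (fun x => f' x / g x) (Icc a b))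
    (hY : 0 < Y) (hlow : ∀ x ∈ Icc a b, Y ≤ |f' x / g x|) :
    ‖∫ x in a..b, (g x : ℂ) * Complex.exp (I * f x)‖ ≤ 12 / Y := by
  set m : ℝ → ℝ := fun x => f' x / g x with hmdef
  have hfc : ContinuousOn f (Icc a b) := fun x hx =>
    (hf x hx).continuousAt.continuousWithinAt
  have hmx' : ∀ x, m x = f' x / g x := fun _ => rfl
  have hg0 : ∀ x ∈ Icc a b, g x ≠ 0 := by
    intro x hx h0
    have := hlow x hx
    rw [h0, div_zero, abs_zero] at this
    linarith
  have hf'eq : ∀ x ∈ Icc a b, f' x = m x * g x := by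
    intro x hx
    rw [hmx']
    exact (div_mul_cancel₀ (f' x) (hg0 x hx)).symm
  -- integrability of f'
  have hcl : ∀ x, max a (min b x) ∈ Icc a b := fun x =>
    ⟨le_max_left _ _, max_le hab (min_le_left _ _)⟩
  set M : ℝ → ℝ := fun x => m (max a (min b x)) with hMdef
  have hMmono : Monotone M := fun x y hxy =>
    hm (hcl x) (hcl y) (max_le_max le_rfl (min_le_min le_rfl hxy))
  have hMeq : ∀ x ∈ Icc a b, M x = m x := by
    intro x hx
    show m (max a (min b x)) = m x
    rw [min_eq_right hx.2, max_eq_right hx.1]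
  obtain ⟨Cg, hCg⟩ : ∃ C, ∀ x ∈ Icc a b, ‖g x‖ ≤ C :=
    isCompact_Icc.exists_bound_of_continuousOn hg
  have hMbd : ∀ x, |M x| ≤ |m a| ⊔ |m b| := by
    intro x
    have h1 : m a ≤ M x := hm (left_mem_Icc.2 hab) (hcl x) (hcl x).1
    have h2 : M x ≤ m b := hm (hcl x) (right_mem_Icc.2 hab) (hcl x).2
    rw [abs_le]
    constructor
    · exact le_trans (le_trans (neg_le_neg (le_max_left _ _)) (neg_abs_le (m a))) h1
    · exact le_trans (le_trans h2 (le_abs_self _)) (le_max_right _ _)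
  haveI : IsFiniteMeasure ((volume : Measure ℝ).restrict (Ioc a b)) :=
    ⟨by rw [Measure.restrict_apply_univ]; exact measure_Ioc_lt_top⟩
  have hf'int : IntervalIntegrable f' volume a b := by
    rw [intervalIntegrable_iff_integrableOn_Ioc_of_le hab]
    have hInt : IntegrableOn (fun x => M x * g x) (Ioc a b) volume := by
      apply Integrable.mono' (integrable_const ((|m a| ⊔ |m b|) * Cg))
      · exact (hMmono.measurable.aemeasurable.aestronglyMeasurable.mul
          ((hg.mono Ioc_subset_Icc_self).aemeasurable measurableSet_Ioc).aestronglyMeasurable)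
      · filter_upwards [ae_restrict_mem measurableSet_Ioc] with x hx
        have hxI : x ∈ Icc a b := Ioc_subset_Icc_self hx
        rw [norm_mul]
        have h0 : (0:ℝ) ≤ Cg := le_trans (norm_nonneg _) (hCg a (left_mem_Icc.2 hab))
        exact mul_le_mul (by rw [Real.norm_eq_abs]; exact hMbd x) (hCg x hxI)
          (norm_nonneg _) (le_trans (abs_nonneg _) (hMbd x))
    apply hInt.congr_fun _ measurableSet_Ioc
    intro x hx
    have hxI : x ∈ Icc a b := Ioc_subset_Icc_self hx
    show M x * g x = f' x
    rw [hMeq x hxI]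
    exact (hf'eq x hxI).symm
  -- splitting point
  set Sneg := {x | x ∈ Icc a b ∧ m x < 0} with hSnegdef
  set c := sSup (insert a Sneg) with hcdef
  have hbdd : BddAbove (insert a Sneg) := by
    refine ⟨b, ?_⟩
    rintro y (rfl | hy)
    · exact hab
    · exact hy.1.2
  have hca : a ≤ c := le_csSup hbdd (mem_insert _ _)
  have hcb : c ≤ b := by
    apply csSup_le (insert_nonempty _ _)
    rintro y (rfl | hy)
    · exact hab
    · exact hy.1.2
  have hneg : ∀ x ∈ Icc a b, x < c → m x ≤ -Y := by
    intro x hx hxc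
    obtain ⟨y, hy, hxy⟩ := exists_lt_of_lt_csSup (insert_nonempty _ _) hxc
    rcases hy with rfl | hy
    · exact absurd hxy (not_lt.2 hx.1)
    · have hmxy : m x ≤ m y := hm hx hy.1 hxy.le
      have hneg' : m x < 0 := lt_of_le_of_lt hmxy hy.2
      have := hlow x hx
      rw [← hmx' x, abs_of_neg hneg'] at this
      linarith
  have hpos : ∀ x ∈ Icc a b, c < x → Y ≤ m x := by
    intro x hx hcx
    by_contra hcon
    push_neg at hcon
    have := hlow x hx
    rw [← hmx' x] at this
    rcases le_abs.1 this with h1 | h1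
    · linarith
    · have hneg' : m x < 0 := by linarith
      have : x ∈ Sneg := ⟨hx, hneg'⟩
      exact absurd (le_csSup hbdd (mem_insert_of_mem _ this)) (not_le.2 hcx)
  -- left piece
  have hleft : ‖∫ x in a..c, (g x : ℂ) * Complex.exp (I * f x)‖ ≤ 6 * (1 / Y) := by
    set Φ₁ : ℝ → ℝ := fun x => 1 / min (m (max a (min c x))) (-Y) with hΦ₁def
    have hcl1 : ∀ x, max a (min c x) ∈ Icc a b := fun x =>
      ⟨le_max_left _ _, max_le hab (le_trans (min_le_left _ _) hcb)⟩
    have hmin_mono : Monotone (fun x => min (m (max a (min c x))) (-Y)) := fun x y hxy =>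
      min_le_min (hm (hcl1 x) (hcl1 y) (max_le_max le_rfl (min_le_min le_rfl hxy))) le_rfl
    have hmin_neg : ∀ x, min (m (max a (min c x))) (-Y) ≤ -Y := fun x => min_le_right _ _
    have hΦ₁anti : Antitone Φ₁ := fun x y hxy =>
      one_div_le_one_div_of_neg_of_le (lt_of_le_of_lt (hmin_neg y) (by linarith))
        (hmin_mono hxy)
    have hΦ₁B : ∀ x, |Φ₁ x| ≤ 1 / Y := by
      intro x
      have ht : min (m (max a (min c x))) (-Y) ≤ -Y := hmin_neg x
      have htneg : min (m (max a (min c x))) (-Y) < 0 := by linarith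
      show |1 / min (m (max a (min c x))) (-Y)| ≤ 1 / Y
      rw [abs_div, abs_one, abs_of_neg htneg]
      exact one_div_le_one_div_of_le hY (by linarith)
    have hg₁ : ∀ᵐ x ∂((volume : Measure ℝ).restrict (Ioc a c)), g x = Φ₁ x * f' x := by
      have h1 : ∀ᵐ x ∂((volume : Measure ℝ).restrict (Ioc a c)), x ≠ c := by
        refine ae_restrict_of_ae ?_
        rw [ae_iff]
        have hset : {x : ℝ | ¬ x ≠ c} = {c} := by ext y; simp
        rw [hset]
        exact measure_singleton c
      filter_upwards [ae_restrict_mem measurableSet_Ioc, h1] with x hx hxc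
      have hxc' : x < c := lt_of_le_of_ne hx.2 hxc
      have hxI : x ∈ Icc a b := ⟨hx.1.le, le_trans hx.2 hcb⟩
      have hclx : max a (min c x) = x := by rw [min_eq_right hx.2, max_eq_right hx.1.le]
      have hmx : m x ≤ -Y := hneg x hxI hxc'
      have hΦx : Φ₁ x = 1 / m x := by
        show 1 / min (m (max a (min c x))) (-Y) = 1 / m x
        rw [hclx, min_eq_left hmx]
      have hne : m x ≠ 0 := by intro h0; rw [h0] at hmx; linarith
      rw [hΦx, hf'eq x hxI, one_div, inv_mul_cancel_left₀ hne]
    exact keyB a c hca f f' Φ₁ g (1/Y)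
      (fun x hx => hf x ⟨hx.1, le_trans hx.2 hcb⟩) (Or.inr hΦ₁anti) hΦ₁B
      (hf'int.mono_set (by rw [uIcc_of_le hca, uIcc_of_le hab]
                           exact Icc_subset_Icc le_rfl hcb))
      hg₁
  -- right piece
  have hright : ‖∫ x in c..b, (g x : ℂ) * Complex.exp (I * f x)‖ ≤ 6 * (1 / Y) := by
    set Φ₂ : ℝ → ℝ := fun x => 1 / max (m (max c (min b x))) Y with hΦ₂def
    have hcl2 : ∀ x, max c (min b x) ∈ Icc a b := fun x =>
      ⟨le_trans hca (le_max_left _ _), max_le hcb (min_le_left _ _)⟩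
    have hmax_mono : Monotone (fun x => max (m (max c (min b x))) Y) := fun x y hxy =>
      max_le_max (hm (hcl2 x) (hcl2 y) (max_le_max le_rfl (min_le_min le_rfl hxy))) le_rfl
    have hmax_pos : ∀ x, Y ≤ max (m (max c (min b x))) Y := fun x => le_max_right _ _
    have hΦ₂anti : Antitone Φ₂ := fun x y hxy =>
      one_div_le_one_div_of_le (lt_of_lt_of_le hY (hmax_pos x)) (hmax_mono hxy)
    have hΦ₂B : ∀ x, |Φ₂ x| ≤ 1 / Y := by
      intro x
      have ht := hmax_pos x
      show |1 / max (m (max c (min b x))) Y| ≤ 1 / Y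
      rw [abs_div, abs_one, abs_of_pos (lt_of_lt_of_le hY ht)]
      exact one_div_le_one_div_of_le hY ht
    have hg₂ : ∀ᵐ x ∂((volume : Measure ℝ).restrict (Ioc c b)), g x = Φ₂ x * f' x := by
      filter_upwards [ae_restrict_mem measurableSet_Ioc] with x hx
      have hxI : x ∈ Icc a b := ⟨le_trans hca hx.1.le, hx.2⟩
      have hclx : max c (min b x) = x := by rw [min_eq_right hx.2, max_eq_right hx.1.le]
      have hmx : Y ≤ m x := hpos x hxI hx.1
      have hΦx : Φ₂ x = 1 / m x := by
        show 1 / max (m (max c (min b x))) Y = 1 / m x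
        rw [hclx, max_eq_left hmx]
      have hne : m x ≠ 0 := by intro h0; rw [h0] at hmx; linarith
      rw [hΦx, hf'eq x hxI, one_div, inv_mul_cancel_left₀ hne]
    exact keyB c b hcb f f' Φ₂ g (1/Y)
      (fun x hx => hf x ⟨le_trans hca hx.1, hx.2⟩) (Or.inr hΦ₂anti) hΦ₂B
      (hf'int.mono_set (by rw [uIcc_of_le hcb, uIcc_of_le hab]
                           exact Icc_subset_Icc hca le_rfl))
      hg₂
  -- combine
  have hcont : ContinuousOn (fun x => (g x : ℂ) * Complex.exp (I * f x)) (Icc a b) :=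
    (Complex.continuous_ofReal.comp_continuousOn hg).mul
      (Complex.continuous_exp.comp_continuousOn
        (continuousOn_const.mul (Complex.continuous_ofReal.comp_continuousOn hfc)))
  have hint1 : IntervalIntegrable (fun x => (g x : ℂ) * Complex.exp (I * f x)) volume a c :=
    (hcont.mono (by rw [uIcc_of_le hca]
                    exact Icc_subset_Icc le_rfl hcb)).intervalIntegrable
  have hint2 : IntervalIntegrable (fun x => (g x : ℂ) * Complex.exp (I * f x)) volume c b :=
    (hcont.mono (by rw [uIcc_of_le hcb]
                    exact Icc_subset_Icc hca le_rfl)).intervalIntegrable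
  rw [← intervalIntegral.integral_add_adjacent_intervals hint1 hint2]
  refine le_trans (norm_add_le _ _) ?_
  have h12 : (6:ℝ) * (1/Y) + 6 * (1/Y) = 12 / Y := by ring
  linarith [hleft, hright]

/-- First-derivative Van der Corput lemma: if `f'/g` is monotone on `[a,b]` and
`|f'(x)/g(x)| ≥ Y > 0` there, then `|∫_a^b g(x) e^{i f(x)} dx| ≤ C/Y` for an absolute
constant `C`. -/
theorem stmt_3 :
    ∃ C : ℝ, 0 < C ∧
      ∀ (a b : ℝ) (f f' g : ℝ → ℝ) (Y : ℝ),
        a ≤ b →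
        (∀ x ∈ Icc a b, HasDerivAt f (f' x) x) →
        ContinuousOn g (Icc a b) →
        (MonotoneOn (fun x => f' x / g x) (Icc a b) ∨
          AntitoneOn (fun x => f' x / g x) (Icc a b)) →
        0 < Y →
        (∀ x ∈ Icc a b, Y ≤ |f' x / g x|) →
        ‖∫ x in a..b, (g x : ℂ) * Complex.exp (I * f x)‖ ≤ C / Y := by
  refine ⟨12, by norm_num, ?_⟩
  intro a b f f' g Y hab hf hg hm hY hlow
  rcases hm with hm | hm
  · exact mainMono a b f f' g Y hab hf hg hm hY hlow
  · -- reflect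
    have hmem : ∀ x ∈ Icc (-b) (-a), -x ∈ Icc a b := by
      intro x hx
      exact ⟨le_neg.1 hx.2, neg_le.1 hx.1⟩
    have hfd : ∀ x ∈ Icc (-b) (-a), HasDerivAt (fun y => f (-y)) (-f' (-x)) x := by
      intro x hx
      have := (hf (-x) (hmem x hx)).comp x (hasDerivAt_neg x)
      rw [show -f' (-x) = f' (-x) * -1 by ring]
      exact this
    have hgc : ContinuousOn (fun y => -g (-y)) (Icc (-b) (-a)) := by
      apply ContinuousOn.neg
      exact hg.comp (continuous_neg.continuousOn) hmem
    have hmono : MonotoneOn (fun x => (-f' (-x)) / (-g (-x))) (Icc (-b) (-a)) := by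
      intro x hx y hy hxy
      simp only [neg_div_neg_eq]
      exact hm (hmem y hy) (hmem x hx) (neg_le_neg hxy)
    have hlow' : ∀ x ∈ Icc (-b) (-a), Y ≤ |(-f' (-x)) / (-g (-x))| := by
      intro x hx
      rw [neg_div_neg_eq]
      exact hlow (-x) (hmem x hx)
    have hmain := mainMono (-b) (-a) (fun y => f (-y)) (fun y => -f' (-y))
      (fun y => -g (-y)) Y (neg_le_neg hab) hfd hgc hmono hY hlow'
    have htrans : ∫ x in (-b)..(-a), ((-g (-x) : ℝ) : ℂ)
          * Complex.exp (I * ((f (-x) : ℝ) : ℂ))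
        = - ∫ x in a..b, (g x : ℂ) * Complex.exp (I * f x) := by
      have hcn := intervalIntegral.integral_comp_neg
        (a := -b) (b := -a) (fun y => -((g y : ℂ) * Complex.exp (I * f y)))
      simp only [neg_neg] at hcn
      calc ∫ x in (-b)..(-a), ((-g (-x) : ℝ) : ℂ) * Complex.exp (I * ((f (-x) : ℝ) : ℂ))
          = ∫ x in (-b)..(-a), -((g (-x) : ℂ) * Complex.exp (I * f (-x))) := by
            apply intervalIntegral.integral_congr
            intro x _
            push_cast
            ring
        _ = - ∫ x in a..b, (g x : ℂ) * Complex.exp (I * f x) := by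
            rw [hcn, intervalIntegral.integral_neg]
    rw [htrans, norm_neg] at hmain
    exact hmain
end
end

section
/- Second derivative Van der Corput lemma: let f be a real twice-differentiable function and g a real continuous function on [a,b] such that f'(x)/g(x) is monotone. If |f''(x)| ≥ Y > 0 and 0 < |g(x)| ≤ N on [a,b], then |∫_a^b g(x) e^{i f(x)} dx| ≤ C·N/√Y for an absolute constant C independent of f and g. -/
open Complex Set

/-!
Titchmarsh's argument. Write `g e^{if} = (g/f') · (f' e^{if})`: the second factor has the
primitive `-i e^{if}` of modulus one, and `g/f'` is monotone, so the second mean value theorem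
(here via Abel summation of Riemann sums) bounds the integral by `6/m` wherever `|f'/g| ≥ m`.
If `f'' ≥ Y`, then `f'` grows at rate at least `Y`, so `|f'| < √Y` only on an interval of length
at most `2/√Y`, where the trivial bound gives `2N/√Y`; on the two remaining intervals
`|f'/g| ≥ √Y/N`. By Darboux's theorem `f''` has constant sign, and `f ↦ -f` conjugates the integral.
-/

open MeasureTheory intervalIntegral Finset

section SecondMeanValue

variable {E : Type*} [NormedAddCommGroup E] [NormedSpace ℝ E]

theorem Finset.norm_sum_range_smul_le_of_monotone {ψ : ℕ → ℝ} (hψ : Monotone ψ) {z : ℕ → E}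
    {M : ℝ} {n : ℕ} (hz : ∀ m ≤ n, ‖∑ i ∈ range m, z i‖ ≤ M) :
    ‖∑ i ∈ range n, ψ i • z i‖ ≤ M * (|ψ (n - 1)| + (ψ (n - 1) - ψ 0)) := by
  have hlast : ‖ψ (n - 1) • ∑ i ∈ range n, z i‖ ≤ |ψ (n - 1)| * M := by
    rw [norm_smul, Real.norm_eq_abs]
    exact mul_le_mul_of_nonneg_left (hz n le_rfl) (abs_nonneg _)
  have hsteps : ‖∑ i ∈ range (n - 1), (ψ (i + 1) - ψ i) • ∑ j ∈ range (i + 1), z j‖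
      ≤ (ψ (n - 1) - ψ 0) * M :=
    calc _ ≤ ∑ i ∈ range (n - 1), (ψ (i + 1) - ψ i) * M := by
          refine (norm_sum_le _ _).trans (sum_le_sum fun i hi => ?_)
          have hstep : 0 ≤ ψ (i + 1) - ψ i := sub_nonneg.2 (hψ i.le_succ)
          rw [norm_smul, Real.norm_of_nonneg hstep]
          exact mul_le_mul_of_nonneg_left (hz _ (by have := mem_range.1 hi; omega)) hstep
      _ = (ψ (n - 1) - ψ 0) * M := by rw [← sum_mul, sum_range_sub ψ]
  rw [sum_range_by_parts]
  calc _ ≤ _ := norm_sub_le _ _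
    _ ≤ |ψ (n - 1)| * M + (ψ (n - 1) - ψ 0) * M := add_le_add hlast hsteps
    _ = _ := by ring

theorem exists_partition_Icc {a b η : ℝ} (hab : a ≤ b) (hη : 0 < η) :
    ∃ (n : ℕ) (x : ℕ → ℝ), 0 < n ∧ Monotone x ∧ x 0 = a ∧ x n = b ∧
      (∀ k, x k ∈ Icc a b) ∧ ∀ k, x (k + 1) - x k ≤ η := by
  obtain ⟨n, hn⟩ := exists_nat_gt ((b - a) / η)
  have hn0 : (0 : ℝ) < n := (div_nonneg (sub_nonneg.2 hab) hη.le).trans_lt hn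
  have hbn : b ≤ a + n * η := by rw [div_lt_iff₀ hη] at hn; linarith
  refine ⟨n, fun k => min (a + k * η) b, by exact_mod_cast hn0, fun i j hij => ?_, by simp [hab],
    min_eq_right hbn, fun k => ⟨le_min (by nlinarith [k.cast_nonneg (α := ℝ)]) hab,
      min_le_right _ _⟩, fun k => ?_⟩
  · have : (i : ℝ) ≤ j := by exact_mod_cast hij
    dsimp only
    gcongr
  · dsimp only
    push_cast
    rw [show a + (k + 1) * η = a + k * η + η by ring]
    rcases le_total (a + k * η) b with h | h
    · rw [min_eq_left h]; linarith [min_le_left (a + k * η + η) b]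
    · rw [min_eq_right h, min_eq_right (by linarith)]; linarith

theorem norm_integral_smul_sub_smul_integral_le {φ : ℝ → ℝ} {h : ℝ → E} {p q K : ℝ}
    (hpq : p ≤ q) (hφ : MonotoneOn φ (Icc p q)) (hh : ContinuousOn h (Icc p q))
    (hK : ∀ t ∈ Icc p q, ‖h t‖ ≤ K) :
    ‖(∫ t in p..q, φ t • h t) - φ q • ∫ t in p..q, h t‖ ≤ (φ q - φ p) * K * (q - p) := by
  have hhi : IntervalIntegrable h volume p q := hh.intervalIntegrable_of_Icc hpq
  have hφhi : IntervalIntegrable (fun t => φ t • h t) volume p q :=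
    (hφ.mono (uIcc_of_le hpq).subset).intervalIntegrable.smul_continuousOn
      (by rwa [uIcc_of_le hpq])
  have hbound : ∀ t ∈ uIoc p q, ‖φ t • h t - φ q • h t‖ ≤ (φ q - φ p) * K := by
    intro t ht
    rw [uIoc_of_le hpq] at ht
    have ht' : t ∈ Icc p q := Ioc_subset_Icc_self ht
    have hφt : φ t ≤ φ q := hφ ht' ⟨hpq, le_rfl⟩ ht.2
    rw [← sub_smul, norm_smul, Real.norm_eq_abs, abs_sub_comm, abs_of_nonneg (sub_nonneg.2 hφt)]
    exact mul_le_mul (by linarith [hφ ⟨le_rfl, hpq⟩ ht' ht'.1]) (hK t ht') (norm_nonneg _)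
      (by linarith [hφ ⟨le_rfl, hpq⟩ ⟨hpq, le_rfl⟩ hpq])
  rw [← intervalIntegral.integral_smul,
    ← intervalIntegral.integral_sub hφhi (g := fun t => φ q • h t) (hhi.smul (φ q))]
  simpa [abs_of_nonneg (sub_nonneg.2 hpq)] using norm_integral_le_of_norm_le_const hbound

theorem norm_integral_smul_sub_sum_le {φ : ℝ → ℝ} {h : ℝ → E} {a b K η : ℝ} {n : ℕ}
    {x : ℕ → ℝ} (hφ : MonotoneOn φ (Icc a b)) (hh : ContinuousOn h (Icc a b))
    (hK : ∀ t ∈ Icc a b, ‖h t‖ ≤ K) (hx : Monotone x) (hx0 : x 0 = a) (hxn : x n = b)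
    (hxab : ∀ k, x k ∈ Icc a b) (hη : ∀ k, x (k + 1) - x k ≤ η) :
    ‖(∫ t in a..b, φ t • h t) - ∑ k ∈ range n, φ (x (k + 1)) • ∫ t in x k..x (k + 1), h t‖
      ≤ K * η * (φ b - φ a) := by
  have hsub : ∀ k, Icc (x k) (x (k + 1)) ⊆ Icc a b := fun k =>
    Icc_subset_Icc (hxab k).1 (hxab (k + 1)).2
  have hK0 : 0 ≤ K := (norm_nonneg _).trans (hK _ (hxab 0))
  have hint : ∀ k < n, IntervalIntegrable (fun t => φ t • h t) volume (x k) (x (k + 1)) :=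
    fun k _ => (((hφ.mono (hsub k)).mono (uIcc_of_le (hx k.le_succ)).subset).intervalIntegrable
      |>.smul_continuousOn (by rw [uIcc_of_le (hx k.le_succ)]; exact hh.mono (hsub k)))
  rw [← hx0, ← hxn, ← sum_integral_adjacent_intervals hint, ← sum_sub_distrib]
  calc _ ≤ ∑ k ∈ range n, (φ (x (k + 1)) - φ (x k)) * K * η := by
        refine (norm_sum_le _ _).trans (sum_le_sum fun k _ => ?_)
        have hmono : φ (x k) ≤ φ (x (k + 1)) := hφ (hxab k) (hxab (k + 1)) (hx k.le_succ)
        refine (norm_integral_smul_sub_smul_integral_le (hx k.le_succ) (hφ.mono (hsub k))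
          (hh.mono (hsub k)) fun t ht => hK t (hsub k ht)).trans ?_
        exact mul_le_mul_of_nonneg_left (hη k) (mul_nonneg (sub_nonneg.2 hmono) hK0)
    _ = K * η * (φ (x n) - φ (x 0)) := by
        rw [← sum_mul, ← sum_mul, sum_range_sub (fun k => φ (x k))]; ring

theorem norm_integral_smul_le_of_monotoneOn {φ : ℝ → ℝ} {h : ℝ → E} {a b M : ℝ} (hab : a ≤ b)
    (hφ : MonotoneOn φ (Icc a b)) (hh : ContinuousOn h (Icc a b))
    (hM : ∀ x ∈ Icc a b, ‖∫ t in a..x, h t‖ ≤ M) :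
    ‖∫ t in a..b, φ t • h t‖ ≤ M * (|φ b| + (φ b - φ a)) := by
  obtain ⟨K, hK⟩ := isCompact_Icc.exists_bound_of_continuousOn hh
  have hK0 : 0 ≤ K := (norm_nonneg _).trans (hK a ⟨le_rfl, hab⟩)
  have hM0 : 0 ≤ M := by simpa using hM a ⟨le_rfl, hab⟩
  have hφab : 0 ≤ φ b - φ a := sub_nonneg.2 (hφ ⟨le_rfl, hab⟩ ⟨hab, le_rfl⟩ hab)
  refine le_of_forall_pos_le_add fun ε hε => ?_
  obtain ⟨n, x, hn, hx, hx0, hxn, hxab, hη⟩ :=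
    exists_partition_Icc hab (div_pos hε (by positivity : 0 < K * (φ b - φ a) + 1))
  have hsum : ‖∑ k ∈ range n, φ (x (k + 1)) • ∫ t in x k..x (k + 1), h t‖
      ≤ M * (|φ b| + (φ b - φ a)) := by
    have habel := norm_sum_range_smul_le_of_monotone (ψ := fun k => φ (x (k + 1)))
      (fun i j hij => hφ (hxab _) (hxab _) (hx (by omega))) (n := n) fun m hm => by
        rw [sum_integral_adjacent_intervals (μ := volume) fun k _ =>
          (hh.mono (Icc_subset_Icc (hxab k).1 (hxab (k + 1)).2)).intervalIntegrable_of_Icc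
            (hx k.le_succ), hx0]
        exact hM _ (hxab m)
    simp only [Nat.sub_add_cancel hn, hxn, zero_add] at habel
    refine habel.trans (mul_le_mul_of_nonneg_left ?_ hM0)
    linarith [hφ ⟨le_rfl, hab⟩ (hxab 1) (hxab 1).1]
  have herr := norm_integral_smul_sub_sum_le hφ hh hK hx hx0 hxn hxab hη
  have hsmall : K * (ε / (K * (φ b - φ a) + 1)) * (φ b - φ a) ≤ ε := by
    rw [mul_comm K, mul_assoc, div_mul_eq_mul_div, div_le_iff₀ (by positivity)]
    nlinarith [mul_nonneg hK0 hφab]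
  calc _ ≤ _ := norm_le_norm_add_norm_sub' _ _
    _ ≤ _ := add_le_add hsum (herr.trans hsmall)

theorem norm_integral_smul_le_of_monotoneOn_or_antitoneOn {φ : ℝ → ℝ} {h : ℝ → E}
    {a b M P : ℝ} (hab : a ≤ b) (hφ : MonotoneOn φ (Icc a b) ∨ AntitoneOn φ (Icc a b))
    (hh : ContinuousOn h (Icc a b)) (hM : ∀ x ∈ Icc a b, ‖∫ t in a..x, h t‖ ≤ M)
    (hP : ∀ x ∈ Icc a b, |φ x| ≤ P) :
    ‖∫ t in a..b, φ t • h t‖ ≤ 3 * M * P := by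
  have hM0 : 0 ≤ M := by simpa using hM a ⟨le_rfl, hab⟩
  have ha := abs_le.1 (hP a ⟨le_rfl, hab⟩)
  have hb := abs_le.1 (hP b ⟨hab, le_rfl⟩)
  rcases hφ with hφ | hφ
  · refine (norm_integral_smul_le_of_monotoneOn hab hφ hh hM).trans ?_
    nlinarith [abs_le.2 hb]
  · have := norm_integral_smul_le_of_monotoneOn hab hφ.neg hh hM
    simp only [neg_smul, intervalIntegral.integral_neg, norm_neg, abs_neg] at this
    refine this.trans ?_
    nlinarith [abs_le.2 hb]

end SecondMeanValue

theorem ContinuousOn.forall_lt_or_forall_gt_of_forall_ne {X α : Type*} [TopologicalSpace X]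
    [TopologicalSpace α] [LinearOrder α] [OrderClosedTopology α] {s : Set X} {u : X → α}
    (hs : IsPreconnected s) (hu : ContinuousOn u s) {m : α} (hne : ∀ x ∈ s, u x ≠ m) :
    (∀ x ∈ s, u x < m) ∨ ∀ x ∈ s, m < u x := by
  contrapose! hne
  obtain ⟨⟨x, hx, hxm⟩, ⟨y, hy, hym⟩⟩ := hne
  obtain ⟨z, hz, hzm⟩ := hs.intermediate_value hy hx hu ⟨hym, hxm⟩
  exact ⟨z, hz, hzm⟩

theorem monotoneOn_or_antitoneOn_inv {α 𝕜 : Type*} [Preorder α] [Field 𝕜] [LinearOrder 𝕜]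
    [IsStrictOrderedRing 𝕜] {s : Set α} {ψ : α → 𝕜}
    (hψ : MonotoneOn ψ s ∨ AntitoneOn ψ s) (hsign : (∀ x ∈ s, ψ x < 0) ∨ ∀ x ∈ s, 0 < ψ x) :
    MonotoneOn (fun x => (ψ x)⁻¹) s ∨ AntitoneOn (fun x => (ψ x)⁻¹) s := by
  have hinv : ∀ x ∈ s, ∀ y ∈ s, ψ x ≤ ψ y → (ψ y)⁻¹ ≤ (ψ x)⁻¹ := by
    intro x hx y hy hxy
    rcases hsign with hneg | hpos
    · exact (inv_le_inv_of_neg (hneg y hy) (hneg x hx)).2 hxy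
    · exact inv_anti₀ (hpos x hx) hxy
  rcases hψ with hψ | hψ
  · exact Or.inr fun x hx y hy hxy => hinv x hx y hy (hψ hx hy hxy)
  · exact Or.inl fun x hx y hy hxy => hinv y hy x hx (hψ hx hy hxy)

theorem norm_integral_deriv_mul_exp_le_two {f f' : ℝ → ℝ} {a b : ℝ}
    (hf : ∀ x ∈ uIcc a b, HasDerivAt f (f' x) x)
    (hint : IntervalIntegrable (fun x => (f' x : ℂ) * exp (I * f x)) volume a b) :
    ‖∫ x in a..b, (f' x : ℂ) * exp (I * f x)‖ ≤ 2 := by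
  have hderiv : ∀ x ∈ uIcc a b,
      HasDerivAt (fun t => -I * exp (I * f t)) ((f' x : ℂ) * exp (I * f x)) x := by
    intro x hx
    refine (((hf x hx).ofReal_comp.const_mul I).cexp.const_mul (-I)).congr_deriv ?_
    linear_combination (-exp (I * f x) * f' x) * I_sq
  have hunit : ∀ t : ℝ, ‖-I * exp (I * f t)‖ = 1 := fun t => by
    rw [norm_mul, norm_neg, norm_I, mul_comm I, norm_exp_ofReal_mul_I, one_mul]
  rw [integral_eq_sub_of_hasDerivAt hderiv hint]
  calc _ ≤ _ := norm_sub_le _ _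
    _ = 2 := by rw [hunit, hunit]; norm_num

theorem norm_integral_mul_exp_le_of_le_abs_div {f f' g : ℝ → ℝ} {a b m : ℝ} (hab : a ≤ b)
    (hf : ∀ x ∈ Icc a b, HasDerivAt f (f' x) x) (hf' : ContinuousOn f' (Icc a b))
    (hg : ContinuousOn g (Icc a b))
    (hmono : MonotoneOn (fun x => f' x / g x) (Icc a b) ∨
      AntitoneOn (fun x => f' x / g x) (Icc a b))
    (hm : 0 < m) (hfg : ∀ x ∈ Icc a b, m ≤ |f' x / g x|) :
    ‖∫ x in a..b, (g x : ℂ) * exp (I * f x)‖ ≤ 6 / m := by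
  have hquot : ∀ x ∈ Icc a b, f' x / g x ≠ 0 := fun x hx h0 => by
    linarith [hfg x hx, abs_eq_zero.2 h0]
  have hg0 : ∀ x ∈ Icc a b, g x ≠ 0 := fun x hx h0 => hquot x hx (by rw [h0, div_zero])
  have hf'0 : ∀ x ∈ Icc a b, f' x ≠ 0 := fun x hx h0 => hquot x hx (by rw [h0, zero_div])
  have hφ := monotoneOn_or_antitoneOn_inv hmono
    ((hf'.div hg hg0).forall_lt_or_forall_gt_of_forall_ne isPreconnected_Icc hquot)
  simp only [inv_div] at hφ
  have hP : ∀ x ∈ Icc a b, |g x / f' x| ≤ m⁻¹ := fun x hx => by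
    rw [← inv_div, abs_inv]
    exact inv_anti₀ hm (hfg x hx)
  set h : ℝ → ℂ := fun x => (f' x : ℂ) * exp (I * f x)
  have hh : ContinuousOn h (Icc a b) := by
    have hfc : ContinuousOn f (Icc a b) := fun x hx => (hf x hx).continuousAt.continuousWithinAt
    fun_prop
  have hM : ∀ x ∈ Icc a b, ‖∫ t in a..x, h t‖ ≤ 2 := fun x hx =>
    have hsub : uIcc a x ⊆ Icc a b := uIcc_subset_Icc ⟨le_rfl, hab⟩ hx
    norm_integral_deriv_mul_exp_le_two (fun t ht => hf t (hsub ht))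
      ((hh.mono hsub).intervalIntegrable)
  have hfactor : EqOn (fun x => (g x : ℂ) * exp (I * f x)) (fun x => (g x / f' x) • h x)
      (uIcc a b) := fun x hx => by
    have : (f' x : ℂ) ≠ 0 := ofReal_ne_zero.2 (hf'0 x (uIcc_of_le hab ▸ hx))
    simp only [h, real_smul, ofReal_div]
    field_simp
  rw [integral_congr hfactor]
  calc _ ≤ 3 * 2 * m⁻¹ := norm_integral_smul_le_of_monotoneOn_or_antitoneOn hab hφ hh hM hP
    _ = 6 / m := by ring

theorem norm_integral_mul_exp_le_of_le_abs_deriv {f f' g : ℝ → ℝ} {a b δ N : ℝ} (hab : a ≤ b)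
    (hf : ∀ x ∈ Icc a b, HasDerivAt f (f' x) x) (hf' : ContinuousOn f' (Icc a b))
    (hg : ContinuousOn g (Icc a b))
    (hmono : MonotoneOn (fun x => f' x / g x) (Icc a b) ∨
      AntitoneOn (fun x => f' x / g x) (Icc a b))
    (hδ : 0 < δ) (hf'δ : ∀ x ∈ Icc a b, δ ≤ |f' x|)
    (hg0 : ∀ x ∈ Icc a b, g x ≠ 0) (hgN : ∀ x ∈ Icc a b, |g x| ≤ N) :
    ‖∫ x in a..b, (g x : ℂ) * exp (I * f x)‖ ≤ 6 * N / δ := by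
  have hN : 0 < N := (abs_pos.2 (hg0 a ⟨le_rfl, hab⟩)).trans_le (hgN a ⟨le_rfl, hab⟩)
  refine (norm_integral_mul_exp_le_of_le_abs_div hab hf hf' hg hmono (div_pos hδ hN)
    fun x hx => ?_).trans_eq (div_div_eq_mul_div _ _ _)
  rw [abs_div]
  exact div_le_div₀ (abs_nonneg _) (hf'δ x hx) (abs_pos.2 (hg0 x hx)) (hgN x hx)

theorem norm_integral_mul_exp_le_mul_sub {f g : ℝ → ℝ} {p q N : ℝ} (hpq : p ≤ q)
    (hgN : ∀ x ∈ Icc p q, |g x| ≤ N) :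
    ‖∫ x in p..q, (g x : ℂ) * exp (I * f x)‖ ≤ N * (q - p) := by
  have hbound : ∀ x ∈ uIoc p q, ‖(g x : ℂ) * exp (I * f x)‖ ≤ N := fun x hx => by
    rw [norm_mul, mul_comm I, norm_exp_ofReal_mul_I, mul_one, norm_real, Real.norm_eq_abs]
    exact hgN x (Ioc_subset_Icc_self (uIoc_of_le hpq ▸ hx))
  simpa [abs_of_nonneg (sub_nonneg.2 hpq)] using norm_integral_le_of_norm_le_const hbound

theorem MonotoneOn.exists_crossing {α β : Type*} [ConditionallyCompleteLinearOrder α]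
    [TopologicalSpace α] [OrderTopology α] [DenselyOrdered α] [LinearOrder β]
    [TopologicalSpace β] [OrderClosedTopology β] {u : α → β} {a b : α}
    (hu : MonotoneOn u (Icc a b)) (hc : ContinuousOn u (Icc a b)) (hab : a ≤ b) (t : β) :
    ∃ c ∈ Icc a b, (a = c ∨ ∀ x ∈ Icc a c, u x ≤ t) ∧ (c = b ∨ ∀ x ∈ Icc c b, t ≤ u x) := by
  have ha : a ∈ Icc a b := ⟨le_rfl, hab⟩
  have hb : b ∈ Icc a b := ⟨hab, le_rfl⟩
  by_cases hta : t ≤ u a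
  · exact ⟨a, ha, Or.inl rfl, Or.inr fun x hx => hta.trans (hu ha hx hx.1)⟩
  by_cases hbt : u b ≤ t
  · exact ⟨b, hb, Or.inr fun x hx => (hu hx hb hx.2).trans hbt, Or.inl rfl⟩
  obtain ⟨c, hc, hct⟩ := intermediate_value_Icc hab hc ⟨(not_le.1 hta).le, (not_le.1 hbt).le⟩
  refine ⟨c, hc, Or.inr fun x hx => ?_, Or.inr fun x hx => ?_⟩
  · exact hct ▸ hu ⟨hx.1, hx.2.trans hc.2⟩ hc hx.2
  · exact hct ▸ hu hc ⟨hc.1.trans hx.1, hx.2⟩ hx.1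

theorem exists_Icc_length_le_abs_ge_outside {u : ℝ → ℝ} {a b Y δ : ℝ} (hab : a ≤ b)
    (hu : ContinuousOn u (Icc a b)) (hY : 0 ≤ Y)
    (hgrowth : ∀ x ∈ Icc a b, ∀ y ∈ Icc a b, x ≤ y → Y * (y - x) ≤ u y - u x) (hδ : 0 < δ) :
    ∃ c₁ c₂, a ≤ c₁ ∧ c₁ ≤ c₂ ∧ c₂ ≤ b ∧ Y * (c₂ - c₁) ≤ 2 * δ ∧
      (a = c₁ ∨ ∀ x ∈ Icc a c₁, δ ≤ |u x|) ∧ (c₂ = b ∨ ∀ x ∈ Icc c₂ b, δ ≤ |u x|) := by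
  have hmono : MonotoneOn u (Icc a b) := fun x hx y hy hxy => by
    nlinarith [hgrowth x hx y hy hxy]
  obtain ⟨c₁, hc₁, hleft, hright₁⟩ := hmono.exists_crossing hu hab (-δ)
  obtain ⟨c₂, hc₂, hleft₂, hright⟩ := hmono.exists_crossing hu hab δ
  have hc₁₂ : c₁ ≤ c₂ := by
    by_contra! h
    have hneg := (hleft.resolve_left (by linarith [hc₂.1])) c₂ ⟨hc₂.1, h.le⟩
    have hpos := (hright.resolve_left (by linarith [hc₁.2])) c₂ ⟨le_rfl, hc₂.2⟩
    linarith
  refine ⟨c₁, c₂, hc₁.1, hc₁₂, hc₂.2, ?_,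
    hleft.imp_right fun h x hx => le_abs.2 (Or.inr (by linarith [h x hx])),
    hright.imp_right fun h x hx => le_abs.2 (Or.inl (h x hx))⟩
  rcases hc₁₂.eq_or_lt with h | h
  · rw [h, sub_self, mul_zero]; positivity
  have h₁ := (hright₁.resolve_left (by linarith [hc₂.2])) c₁ ⟨le_rfl, hc₁.2⟩
  have h₂ := (hleft₂.resolve_left (by linarith [hc₁.1])) c₂ ⟨hc₂.1, le_rfl⟩
  linarith [hgrowth c₁ hc₁ c₂ hc₂ hc₁₂]

theorem norm_integral_mul_exp_le_of_le_deriv2 {f f' f'' g : ℝ → ℝ} {a b Y N : ℝ} (hab : a ≤ b)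
    (hf : ∀ x ∈ Icc a b, HasDerivAt f (f' x) x) (hf' : ∀ x ∈ Icc a b, HasDerivAt f' (f'' x) x)
    (hg : ContinuousOn g (Icc a b))
    (hmono : MonotoneOn (fun x => f' x / g x) (Icc a b) ∨
      AntitoneOn (fun x => f' x / g x) (Icc a b))
    (hY : 0 < Y) (hf'' : ∀ x ∈ Icc a b, Y ≤ f'' x)
    (hg0 : ∀ x ∈ Icc a b, g x ≠ 0) (hgN : ∀ x ∈ Icc a b, |g x| ≤ N) :
    ‖∫ x in a..b, (g x : ℂ) * exp (I * f x)‖ ≤ 14 * N / √Y := by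
  set δ := √Y
  have hδ : 0 < δ := Real.sqrt_pos.2 hY
  have hN : 0 < N := (abs_pos.2 (hg0 a ⟨le_rfl, hab⟩)).trans_le (hgN a ⟨le_rfl, hab⟩)
  have hf'c : ContinuousOn f' (Icc a b) := fun x hx => (hf' x hx).continuousAt.continuousWithinAt
  have hgrowth : ∀ x ∈ Icc a b, ∀ y ∈ Icc a b, x ≤ y → Y * (y - x) ≤ f' y - f' x :=
    (convex_Icc a b).mul_sub_le_image_sub_of_le_deriv hf'c
      (fun x hx => (hf' x (interior_subset hx)).differentiableAt.differentiableWithinAt)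
      fun x hx => (hf' x (interior_subset hx)).deriv ▸ hf'' x (interior_subset hx)
  obtain ⟨c₁, c₂, hac₁, hc₁₂, hc₂b, hgap, hleft, hright⟩ :=
    exists_Icc_length_le_abs_ge_outside hab hf'c hY.le hgrowth hδ
  set F : ℝ → ℂ := fun x => (g x : ℂ) * exp (I * f x)
  have hFint : ∀ p ∈ Icc a b, ∀ q ∈ Icc a b, IntervalIntegrable F volume p q := by
    have hfc : ContinuousOn f (Icc a b) := fun x hx => (hf x hx).continuousAt.continuousWithinAt
    have hFc : ContinuousOn F (Icc a b) := by fun_prop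
    exact fun p hp q hq => (hFc.mono (uIcc_subset_Icc hp hq)).intervalIntegrable
  have hpiece : ∀ p q, a ≤ p → p ≤ q → q ≤ b → (p = q ∨ ∀ x ∈ Icc p q, δ ≤ |f' x|) →
      ‖∫ x in p..q, F x‖ ≤ 6 * N / δ := by
    rintro p q hap hpq hqb (rfl | hf'δ)
    · rw [integral_same, norm_zero]; positivity
    have hsub : Icc p q ⊆ Icc a b := Icc_subset_Icc hap hqb
    exact norm_integral_mul_exp_le_of_le_abs_deriv hpq (fun x hx => hf x (hsub hx))
      (hf'c.mono hsub) (hg.mono hsub) (hmono.imp (·.mono hsub) (·.mono hsub)) hδ hf'δ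
      (fun x hx => hg0 x (hsub hx)) fun x hx => hgN x (hsub hx)
  have hmid : ‖∫ x in c₁..c₂, F x‖ ≤ 2 * N / δ := by
    have hlen : (c₂ - c₁) * δ ≤ 2 := by nlinarith [Real.sq_sqrt hY.le]
    refine (norm_integral_mul_exp_le_mul_sub hc₁₂
      fun x hx => hgN x ⟨hac₁.trans hx.1, hx.2.trans hc₂b⟩).trans ?_
    rw [le_div_iff₀ hδ]
    nlinarith
  have hsplit : ∫ x in a..b, F x =
      (∫ x in a..c₁, F x) + (∫ x in c₁..c₂, F x) + ∫ x in c₂..b, F x := by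
    have ha : a ∈ Icc a b := ⟨le_rfl, hab⟩
    have hc₁ : c₁ ∈ Icc a b := ⟨hac₁, hc₁₂.trans hc₂b⟩
    have hc₂ : c₂ ∈ Icc a b := ⟨hac₁.trans hc₁₂, hc₂b⟩
    rw [integral_add_adjacent_intervals (hFint a ha c₁ hc₁) (hFint c₁ hc₁ c₂ hc₂),
      integral_add_adjacent_intervals (hFint a ha c₂ hc₂) (hFint c₂ hc₂ b ⟨hab, le_rfl⟩)]
  have h₁ := hpiece a c₁ le_rfl hac₁ (hc₁₂.trans hc₂b) hleft
  have h₃ := hpiece c₂ b (hac₁.trans hc₁₂) hc₂b le_rfl hright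
  calc ‖∫ x in a..b, F x‖ ≤ 6 * N / δ + 2 * N / δ + 6 * N / δ :=
        hsplit ▸ (norm_add₃_le).trans (by gcongr)
    _ = 14 * N / δ := by ring

theorem norm_integral_mul_exp_neg (g f : ℝ → ℝ) (a b : ℝ) :
    ‖∫ x in a..b, (g x : ℂ) * exp (I * ↑(-f x))‖ = ‖∫ x in a..b, (g x : ℂ) * exp (I * f x)‖ := by
  rw [← RCLike.norm_conj, ← intervalIntegral_conj]
  congr 2 with x
  simp only [map_mul, map_neg, conj_ofReal, ← exp_conj, conj_I, ofReal_neg, neg_mul, mul_neg,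
    neg_neg]

/-- Second-derivative Van der Corput lemma: if `f'/g` is monotone on `[a,b]`,
`|f''(x)| ≥ Y > 0` and `0 < |g(x)| ≤ N` there, then
`|∫_a^b g(x) e^{i f(x)} dx| ≤ C·N/√Y` for an absolute constant `C`. -/
theorem stmt_4 :
    ∃ C : ℝ, 0 < C ∧
      ∀ (a b : ℝ) (f f' f'' g : ℝ → ℝ) (Y N : ℝ),
        a ≤ b →
        (∀ x ∈ Icc a b, HasDerivAt f (f' x) x) →
        (∀ x ∈ Icc a b, HasDerivAt f' (f'' x) x) →
        ContinuousOn g (Icc a b) →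
        (MonotoneOn (fun x => f' x / g x) (Icc a b) ∨
          AntitoneOn (fun x => f' x / g x) (Icc a b)) →
        0 < Y →
        (∀ x ∈ Icc a b, Y ≤ |f'' x|) →
        (∀ x ∈ Icc a b, 0 < |g x| ∧ |g x| ≤ N) →
        ‖∫ x in a..b, (g x : ℂ) * Complex.exp (I * f x)‖ ≤ C * N / Real.sqrt Y := by
  refine ⟨14, by norm_num, fun a b f f' f'' g Y N hab hf hf' hg hmono hY hf'' hgN => ?_⟩
  have hg0 : ∀ x ∈ Icc a b, g x ≠ 0 := fun x hx => abs_pos.1 (hgN x hx).1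
  have hf''0 : ∀ x ∈ Icc a b, f'' x ≠ 0 := fun x hx h0 => by
    linarith [hf'' x hx, abs_eq_zero.2 h0]
  rcases hasDerivWithinAt_forall_lt_or_forall_gt_of_forall_ne (convex_Icc a b)
    (fun x hx => (hf' x hx).hasDerivWithinAt) hf''0 with hneg | hpos
  · rw [← norm_integral_mul_exp_neg]
    refine norm_integral_mul_exp_le_of_le_deriv2 hab (fun x hx => (hf x hx).neg)
      (fun x hx => (hf' x hx).neg) hg ?_ hY (fun x hx => ?_) hg0 fun x hx => (hgN x hx).2
    · simp only [neg_div]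
      exact hmono.symm.imp (·.neg) (·.neg)
    · simpa [abs_of_neg (hneg x hx)] using hf'' x hx
  · exact norm_integral_mul_exp_le_of_le_deriv2 hab hf hf' hg hmono hY
      (fun x hx => by simpa [abs_of_pos (hpos x hx)] using hf'' x hx) hg0 fun x hx => (hgN x hx).2
end

section
/- Let m(x,r,h) = σ_{1+2h}(r)·(ζ²(1+h)/ζ(2+2h))·x^h(1+x)^h + r^{2h}σ_{1−2h}(r)·(ζ²(1−h)/ζ(2−2h)) + r^h σ₁(r)·(ζ(1+h)ζ(1−h)/ζ(2))·(x^h+(1+x)^h). Then the limit m(x,r) = lim_{h→0} m(x,r,h) exists and equals (σ₁(r)/ζ(2))·(log x·log(1+x) + log(x(1+x))·(2γ₀−log r) + (2γ₀−log r)²) + (log(x(1+x)) + 4γ₀ − 2log r)·(d/dh)(σ_{1+2h}(r)/ζ(2+2h))|_{h=0} + (d²/dh²)(σ_{1+2h}(r)/ζ(2+2h))|_{h=0}. -/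
open Complex Real Filter

/-- The generalized divisor sum `σ_z(n) = Σ_{d|n} d^z` with complex exponent. -/
noncomputable def sigmaC (z : ℂ) (n : ℕ) : ℂ := ∑ d ∈ n.divisors, (d : ℂ) ^ z

/-- The function `m(x,r,h)` from Motohashi's formula for the additive divisor problem. -/
noncomputable def mxrh (x : ℝ) (r : ℕ) (h : ℂ) : ℂ :=
  sigmaC (1 + 2 * h) r * (riemannZeta (1 + h) ^ 2 / riemannZeta (2 + 2 * h)) *
      (x : ℂ) ^ h * ((1 : ℂ) + x) ^ h
    + (r : ℂ) ^ (2 * h) * sigmaC (1 - 2 * h) r *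
      (riemannZeta (1 - h) ^ 2 / riemannZeta (2 - 2 * h))
    + (r : ℂ) ^ h * sigmaC 1 r * (riemannZeta (1 + h) * riemannZeta (1 - h) / riemannZeta 2) *
      ((x : ℂ) ^ h + ((1 : ℂ) + x) ^ h)

/-!
Write `ζ(1 + h) = φ(h) / h` with `φ` analytic at `0`, `φ(0) = 1` (the residue of `ζ` at `1`)
and `φ'(0) = γ₀` (the constant term of the Laurent expansion). With
`A(h) = σ_{1+2h}(r) / ζ(2+2h)`, `h² m(x,r,h)` is then the function
`N(h) = A(h) φ(h)² xʰ (1+x)ʰ + r^{2h} A(-h) φ(-h)² - A(0) φ(h) φ(-h) rʰ (xʰ + (1+x)ʰ)`,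
analytic at `0`. Leibniz' rule gives `N(0) = N'(0) = 0` (the poles cancel), and in `N''(0)`
the unknown `φ''(0)` cancels too. Hence `m(x,r,h) = N(h) / h² → N''(0) / 2`.
-/

open Topology

structure HasJet2 (f : ℂ → ℂ) (b₀ b₁ b₂ : ℂ) : Prop where
  analyticAt : AnalyticAt ℂ f 0
  apply_zero : f 0 = b₀
  deriv_zero : deriv f 0 = b₁
  iteratedDeriv_two_zero : iteratedDeriv 2 f 0 = b₂

namespace HasJet2

variable {f g : ℂ → ℂ} {b₀ b₁ b₂ c₀ c₁ c₂ : ℂ}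

lemma add (hf : HasJet2 f b₀ b₁ b₂) (hg : HasJet2 g c₀ c₁ c₂) :
    HasJet2 (fun h => f h + g h) (b₀ + c₀) (b₁ + c₁) (b₂ + c₂) where
  analyticAt := hf.analyticAt.add hg.analyticAt
  apply_zero := by rw [hf.apply_zero, hg.apply_zero]
  deriv_zero := by
    rw [deriv_fun_add hf.analyticAt.differentiableAt hg.analyticAt.differentiableAt,
      hf.deriv_zero, hg.deriv_zero]
  iteratedDeriv_two_zero := by
    rw [iteratedDeriv_fun_add hf.analyticAt.contDiffAt hg.analyticAt.contDiffAt,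
      hf.iteratedDeriv_two_zero, hg.iteratedDeriv_two_zero]

lemma sub (hf : HasJet2 f b₀ b₁ b₂) (hg : HasJet2 g c₀ c₁ c₂) :
    HasJet2 (fun h => f h - g h) (b₀ - c₀) (b₁ - c₁) (b₂ - c₂) where
  analyticAt := hf.analyticAt.sub hg.analyticAt
  apply_zero := by rw [hf.apply_zero, hg.apply_zero]
  deriv_zero := by
    rw [deriv_fun_sub hf.analyticAt.differentiableAt hg.analyticAt.differentiableAt,
      hf.deriv_zero, hg.deriv_zero]
  iteratedDeriv_two_zero := by
    rw [iteratedDeriv_fun_sub hf.analyticAt.contDiffAt hg.analyticAt.contDiffAt,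
      hf.iteratedDeriv_two_zero, hg.iteratedDeriv_two_zero]

lemma mul (hf : HasJet2 f b₀ b₁ b₂) (hg : HasJet2 g c₀ c₁ c₂) :
    HasJet2 (fun h => f h * g h) (b₀ * c₀) (b₁ * c₀ + b₀ * c₁)
      (b₂ * c₀ + 2 * b₁ * c₁ + b₀ * c₂) where
  analyticAt := hf.analyticAt.mul hg.analyticAt
  apply_zero := by rw [hf.apply_zero, hg.apply_zero]
  deriv_zero := by
    rw [deriv_fun_mul hf.analyticAt.differentiableAt hg.analyticAt.differentiableAt,
      hf.apply_zero, hg.apply_zero, hf.deriv_zero, hg.deriv_zero]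
  iteratedDeriv_two_zero := by
    rw [iteratedDeriv_fun_mul hf.analyticAt.contDiffAt hg.analyticAt.contDiffAt]
    simp only [Finset.sum_range_succ, Finset.range_one, Finset.sum_singleton,
      Nat.choose_zero_right, Nat.choose_succ_self_right, Nat.choose_self, Nat.cast_one,
      Nat.cast_ofNat, iteratedDeriv_zero, iteratedDeriv_one, Nat.reduceAdd, Nat.reduceSub,
      hf.apply_zero, hg.apply_zero, hf.deriv_zero, hg.deriv_zero, hf.iteratedDeriv_two_zero,
      hg.iteratedDeriv_two_zero]
    ring

lemma comp_neg (hf : HasJet2 f b₀ b₁ b₂) : HasJet2 (fun h => f (-h)) b₀ (-b₁) b₂ where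
  analyticAt := hf.analyticAt.comp_of_eq analyticAt_id.neg neg_zero
  apply_zero := by simpa using hf.apply_zero
  deriv_zero := by simpa [hf.deriv_zero] using iteratedDeriv_comp_neg 1 f 0
  iteratedDeriv_two_zero := by
    simpa [hf.iteratedDeriv_two_zero] using iteratedDeriv_comp_neg 2 f 0

lemma tendsto_div_sq {b : ℂ} (hf : HasJet2 f 0 0 b) :
    Tendsto (fun h => f h / h ^ 2) (𝓝[≠] 0) (𝓝 (b / 2)) := by
  set g := dslope (dslope f 0) 0
  have hfg : ∀ h, f h = h ^ 2 * g h := by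
    intro h
    have hf' : dslope f 0 0 = 0 := by rw [dslope_same, hf.deriv_zero]
    rw [← sub_smul_dslope_of_zero hf.apply_zero, ← sub_smul_dslope_of_zero hf' h]
    simp only [sub_zero, smul_eq_mul]
    ring
  obtain ⟨p, hp⟩ := hf.analyticAt
  have hg : AnalyticAt ℂ g 0 :=
    hp.has_fpower_series_dslope_fslope.has_fpower_series_dslope_fslope.analyticAt
  have hb : b / 2 = g 0 := by
    rw [← hf.iteratedDeriv_two_zero, funext hfg,
      iteratedDeriv_fun_mul (by fun_prop) hg.contDiffAt]
    simp [Finset.sum_range_succ]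
  rw [hb]
  refine hg.continuousAt.continuousWithinAt.tendsto.congr' ?_
  filter_upwards [self_mem_nhdsWithin] with h hh
  rw [hfg, mul_div_cancel_left₀ _ (pow_ne_zero 2 hh)]

end HasJet2

lemma hasJet2_const (c : ℂ) : HasJet2 (fun _ => c) c 0 0 :=
  ⟨analyticAt_const, rfl, deriv_const 0 c, by simp [iteratedDeriv_const]⟩

lemma hasJet2_const_cpow_mul {c : ℂ} (hc : c ≠ 0) (w : ℂ) :
    HasJet2 (fun h => c ^ (w * h)) 1 (w * Complex.log c) ((w * Complex.log c) ^ 2) := by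
  have hexp : (fun h => c ^ (w * h)) = fun h => exp (w * Complex.log c * h) := by
    ext h
    rw [cpow_def_of_ne_zero hc]
    ring_nf
  rw [hexp]
  refine ⟨by fun_prop, by simp, ?_, by simp⟩
  simpa using congrFun (iteratedDeriv_cexp_const_mul 1 (w * Complex.log c)) 0

lemma hasJet2_const_cpow {c : ℂ} (hc : c ≠ 0) :
    HasJet2 (fun h => c ^ h) 1 (Complex.log c) (Complex.log c ^ 2) := by
  simpa using hasJet2_const_cpow_mul hc 1

noncomputable def mulZetaOneAdd : ℂ → ℂ :=
  Function.update (fun h => h * riemannZeta (1 + h)) 0 1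

lemma mulZetaOneAdd_of_ne_zero {h : ℂ} (hh : h ≠ 0) :
    mulZetaOneAdd h = h * riemannZeta (1 + h) :=
  Function.update_of_ne hh _ _

lemma mulZetaOneAdd_zero : mulZetaOneAdd 0 = 1 := Function.update_self _ _ _

lemma tendsto_const_add_nhdsNE_zero (a : ℂ) :
    Tendsto (fun h => a + h) (𝓝[≠] 0) (𝓝[≠] a) := by
  refine tendsto_nhdsWithin_of_tendsto_nhds_of_eventually_within _ ?_ ?_
  · exact (Continuous.tendsto' (by fun_prop) 0 a (add_zero a)).mono_left nhdsWithin_le_nhds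
  · filter_upwards [self_mem_nhdsWithin] with h hh
    simpa using hh

lemma continuousAt_mulZetaOneAdd : ContinuousAt mulZetaOneAdd 0 := by
  rw [← continuousWithinAt_compl_self, ContinuousWithinAt, mulZetaOneAdd_zero]
  refine (riemannZeta_residue_one.comp (tendsto_const_add_nhdsNE_zero 1)).congr' ?_
  filter_upwards [self_mem_nhdsWithin] with h hh
  simp [mulZetaOneAdd_of_ne_zero hh]

lemma analyticAt_mulZetaOneAdd : AnalyticAt ℂ mulZetaOneAdd 0 := by
  refine analyticAt_of_differentiable_on_punctured_nhds_of_continuousAt ?_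
    continuousAt_mulZetaOneAdd
  filter_upwards [self_mem_nhdsWithin] with h hh
  have hζ : DifferentiableAt ℂ (fun h => h * riemannZeta (1 + h)) h :=
    differentiableAt_id.mul ((differentiableAt_riemannZeta (by simpa using hh)).comp h
      (by fun_prop))
  refine hζ.congr_of_eventuallyEq ?_
  filter_upwards [isOpen_compl_singleton.mem_nhds hh] with w hw
  exact mulZetaOneAdd_of_ne_zero hw

lemma deriv_mulZetaOneAdd_zero : deriv mulZetaOneAdd 0 = eulerMascheroniConstant := by
  have hslope := hasDerivAt_iff_tendsto_slope.mp
    analyticAt_mulZetaOneAdd.differentiableAt.hasDerivAt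
  refine tendsto_nhds_unique (hslope.congr' ?_)
    (tendsto_riemannZeta_sub_one_div.comp (tendsto_const_add_nhdsNE_zero 1))
  filter_upwards [self_mem_nhdsWithin] with h (hh : h ≠ 0)
  rw [slope_def_field, mulZetaOneAdd_of_ne_zero hh, mulZetaOneAdd_zero]
  simp only [Function.comp_apply, add_sub_cancel_left, sub_zero]
  field_simp

lemma hasJet2_mulZetaOneAdd :
    HasJet2 mulZetaOneAdd 1 eulerMascheroniConstant (iteratedDeriv 2 mulZetaOneAdd 0) :=
  ⟨analyticAt_mulZetaOneAdd, mulZetaOneAdd_zero, deriv_mulZetaOneAdd_zero, rfl⟩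

noncomputable def mxrhNumerator (A : ℂ → ℂ) (a b c h : ℂ) : ℂ :=
  A h * (mulZetaOneAdd h * mulZetaOneAdd h) * (a ^ h * b ^ h)
    + c ^ (2 * h) * (A (-h) * (mulZetaOneAdd (-h) * mulZetaOneAdd (-h)))
    - A 0 * (mulZetaOneAdd h * mulZetaOneAdd (-h) * (c ^ h * (a ^ h + b ^ h)))

lemma hasJet2_mxrhNumerator {A : ℂ → ℂ} (hA : AnalyticAt ℂ A 0) {a b c : ℂ}
    (ha : a ≠ 0) (hb : b ≠ 0) (hc : c ≠ 0) :
    HasJet2 (mxrhNumerator A a b c) 0 0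
      (2 * (A 0 * (Complex.log a * Complex.log b
          + (Complex.log a + Complex.log b) * (2 * eulerMascheroniConstant - Complex.log c)
          + (2 * eulerMascheroniConstant - Complex.log c) ^ 2)
        + (Complex.log a + Complex.log b + 4 * eulerMascheroniConstant - 2 * Complex.log c)
          * deriv A 0
        + iteratedDeriv 2 A 0)) := by
  have jA : HasJet2 A (A 0) (deriv A 0) (iteratedDeriv 2 A 0) := ⟨hA, rfl, rfl, rfl⟩
  have jζ := hasJet2_mulZetaOneAdd
  have ja := hasJet2_const_cpow ha
  have jb := hasJet2_const_cpow hb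
  have jN := (((jA.mul (jζ.mul jζ)).mul (ja.mul jb)).add
      ((hasJet2_const_cpow_mul hc 2).mul (jA.comp_neg.mul (jζ.comp_neg.mul jζ.comp_neg)))).sub
    ((hasJet2_const (A 0)).mul ((jζ.mul jζ.comp_neg).mul
      ((hasJet2_const_cpow hc).mul (ja.add jb))))
  unfold mxrhNumerator
  convert jN using 1 <;> ring

lemma mxrh_eq_mxrhNumerator_div_sq (x : ℝ) (r : ℕ) {h : ℂ} (hh : h ≠ 0) :
    mxrh x r h = mxrhNumerator (fun h => sigmaC (1 + 2 * h) r / riemannZeta (2 + 2 * h))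
      x (1 + x) r h / h ^ 2 := by
  rw [eq_div_iff (pow_ne_zero 2 hh), mxrh, mxrhNumerator, mulZetaOneAdd_of_ne_zero hh,
    mulZetaOneAdd_of_ne_zero (neg_ne_zero.mpr hh)]
  simp only [mul_zero, add_zero, mul_neg, ← sub_eq_add_neg]
  ring

lemma differentiable_sigmaC (n : ℕ) : Differentiable ℂ (fun z => sigmaC z n) := by
  unfold sigmaC
  refine Differentiable.fun_sum fun d hd => differentiable_id.const_cpow (Or.inl ?_)
  exact Nat.cast_ne_zero.mpr (Nat.pos_of_mem_divisors hd).ne'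

lemma analyticAt_sigmaC_div_riemannZeta (n : ℕ) :
    AnalyticAt ℂ (fun h => sigmaC (1 + 2 * h) n / riemannZeta (2 + 2 * h)) 0 := by
  have hσ : AnalyticAt ℂ (fun h => sigmaC (1 + 2 * h) n) 0 :=
    ((differentiable_sigmaC n).comp (f := fun h => 1 + 2 * h) (by fun_prop)).analyticAt 0
  have hζ : AnalyticAt ℂ (fun h => riemannZeta (2 + 2 * h)) 0 :=
    (analyticOn_riemannZeta (2 + 2 * 0) (by norm_num)).comp_of_eq (by fun_prop) rfl
  exact hσ.div hζ (by simpa using riemannZeta_ne_zero_of_one_lt_re (s := 2) (by norm_num))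

/-- The limit `m(x,r) = lim_{h→0} m(x,r,h)` exists and equals the stated expression in
terms of `γ₀` and the derivatives of `h ↦ σ_{1+2h}(r)/ζ(2+2h)` at `h = 0`. -/
theorem stmt_15 (x : ℝ) (hx : 0 < x) (r : ℕ) (hr : 0 < r) :
    Tendsto (fun h : ℂ => mxrh x r h) (nhdsWithin 0 {0}ᶜ)
      (nhds
        ((sigmaC 1 r / riemannZeta 2) *
            ((Real.log x * Real.log (1 + x) : ℝ)
              + (Real.log (x * (1 + x)) : ℝ) *
                  ((2 * Real.eulerMascheroniConstant - Real.log r : ℝ))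
              + ((2 * Real.eulerMascheroniConstant - Real.log r : ℝ)) ^ 2)
          + ((Real.log (x * (1 + x)) + 4 * Real.eulerMascheroniConstant
              - 2 * Real.log r : ℝ)) *
              deriv (fun h : ℂ => sigmaC (1 + 2 * h) r / riemannZeta (2 + 2 * h)) 0
          + iteratedDeriv 2 (fun h : ℂ => sigmaC (1 + 2 * h) r / riemannZeta (2 + 2 * h)) 0)) := by
  have hx1 : (0 : ℝ) < 1 + x := by linarith
  have hx1ne : (1 + x : ℂ) ≠ 0 := by exact_mod_cast hx1.ne'
  have hlim := (hasJet2_mxrhNumerator (analyticAt_sigmaC_div_riemannZeta r)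
    (ofReal_ne_zero.mpr hx.ne') hx1ne (Nat.cast_ne_zero.mpr hr.ne')).tendsto_div_sq
  have hlog_one_add : Complex.log (1 + x) = (Real.log (1 + x) : ℂ) := by
    rw [ofReal_log hx1.le, ofReal_add, ofReal_one]
  convert hlim.congr' ?_ using 2
  · rw [Real.log_mul hx.ne' hx1.ne', ← ofReal_log hx.le, hlog_one_add, ← ofReal_natCast,
      ← ofReal_log r.cast_nonneg]
    simp only [mul_zero, add_zero]
    push_cast
    ring
  · filter_upwards [self_mem_nhdsWithin] with h hh
    exact (mxrh_eq_mxrhNumerator_div_sq x r hh).symm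
end
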